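/- Let $L$ be a discrete random variable with finite range $E$, all atoms of positive probability, $q^x_t := \mathbb{P}(L=x|\mathcal{F}_t)/\mathbb{P}(L=x)$, and $\mathcal{G}_t := \mathcal{F}_t\vee\sigma(L)$. If $\mathbb{E}[1/q^L_T]=1$ (equivalently, $\mathbb{P}(q^x_T>0)=1$ for all $x\in E$), then the process $(1/q^L_t)_{t\in[0,T]}$ is a $(\mathcal{G}_t)$-martingale. Conversely, if $(1/q^L_t)$ is a $(\mathcal{G}_t)$-martingale, then $\mathbb{E}[1/q^L_T]=1$ (using $q^L_0=1$). -/

import Mathlib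

/-!
Write `Z^x = P(L = x | m)`, so that `1 / q^L = ∑ₓ 1{L = x} P(L = x) / Z^x`. For `B ∈ m`, pulling
the `m`-measurable factor `1_B 1{Z^x > 0} / Z^x` out of `E[1{L = x} · _]` gives
`E[1_{B ∩ {L = x}} / Z^x] = P(B ∩ {Z^x > 0})`. A set `A ∈ m ⊔ σ(L)` agrees on each fibre
`{L = x}` with some `B_x ∈ m`, hence `∫_A 1/q^L = ∑ₓ P(L = x) P(B_x ∩ {q^x > 0})`.
With `A = Ω` this shows `E[1/q^L_T] = 1` iff every `q^x_T` is a.s. positive. Positivity of `q^x`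
propagates from `T` to earlier times (it is a martingale), and then the integrals over `A` no
longer depend on the time: this is the martingale property. Conversely the martingale property
gives `E[1/q^L_T] = E[1/q^L_0]`, and a trivial `𝓕_0` forces `q^x_0 > 0` a.s.
-/

open MeasureTheory ProbabilityTheory Set
open scoped ENNReal

section CondExp

variable {Ω : Type*} {m m0 : MeasurableSpace Ω} {μ : Measure Ω}

theorem lintegral_ofReal_mul_eq_lintegral_condExp_mul (hm : m ≤ m0) [SigmaFinite (μ.trim hm)]
    {f : Ω → ℝ} (hf : Integrable f μ) (hf0 : 0 ≤ᵐ[μ] f) {g : Ω → ℝ≥0∞} (hg : Measurable[m] g) :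
    ∫⁻ ω, ENNReal.ofReal (f ω) * g ω ∂μ = ∫⁻ ω, ENNReal.ofReal (μ[f|m] ω) * g ω ∂μ := by
  have hfm : AEMeasurable (fun ω => ENNReal.ofReal (f ω)) μ :=
    hf.aestronglyMeasurable.aemeasurable.ennreal_ofReal
  have hcm : AEMeasurable (fun ω => ENNReal.ofReal (μ[f|m] ω)) μ :=
    integrable_condExp.aestronglyMeasurable.aemeasurable.ennreal_ofReal
  have htrim : (μ.withDensity fun ω => ENNReal.ofReal (f ω)).trim hm
      = (μ.withDensity fun ω => ENNReal.ofReal (μ[f|m] ω)).trim hm := by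
    refine @Measure.ext _ m _ _ fun s hs => ?_
    rw [trim_measurableSet_eq hm hs, trim_measurableSet_eq hm hs, withDensity_apply _ (hm s hs),
      withDensity_apply _ (hm s hs),
      ← ofReal_integral_eq_lintegral_ofReal hf.integrableOn (ae_restrict_of_ae hf0),
      ← ofReal_integral_eq_lintegral_ofReal integrable_condExp.integrableOn
        (ae_restrict_of_ae (condExp_nonneg hf0)), setIntegral_condExp hm hf hs]
  have hg0 : Measurable[m0] g := hg.mono hm le_rfl
  calc ∫⁻ ω, ENNReal.ofReal (f ω) * g ω ∂μ
      = ∫⁻ ω, g ω ∂(μ.withDensity fun ω => ENNReal.ofReal (f ω)).trim hm := by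
        rw [lintegral_trim hm hg, lintegral_withDensity_eq_lintegral_mul₀' hfm hg0.aemeasurable]
        rfl
    _ = ∫⁻ ω, ENNReal.ofReal (μ[f|m] ω) * g ω ∂μ := by
        rw [htrim, lintegral_trim hm hg,
          lintegral_withDensity_eq_lintegral_mul₀' hcm hg0.aemeasurable]
        rfl

theorem ae_pos_condExp (hm : m ≤ m0) [SigmaFinite (μ.trim hm)] {f : Ω → ℝ}
    (hf : Integrable f μ) (hf0 : ∀ᵐ ω ∂μ, 0 < f ω) : ∀ᵐ ω ∂μ, 0 < μ[f|m] ω := by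
  set A := {ω | μ[f|m] ω ≤ 0}
  have hA : MeasurableSet[m] A :=
    measurableSet_le stronglyMeasurable_condExp.measurable measurable_const
  have h := lintegral_ofReal_mul_eq_lintegral_condExp_mul hm hf (hf0.mono fun _ h => h.le)
    (measurable_const.indicator hA : Measurable[m] (A.indicator fun _ => (1 : ℝ≥0∞)))
  have hzero : ∀ ω, ENNReal.ofReal (μ[f|m] ω) * A.indicator (fun _ => 1) ω = 0 := fun ω => by
    by_cases hω : ω ∈ A
    · simp [hω, ENNReal.ofReal_of_nonpos (show μ[f|m] ω ≤ 0 from hω)]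
    · simp [hω]
  rw [lintegral_congr hzero, lintegral_zero, lintegral_eq_zero_iff'] at h
  · filter_upwards [h, hf0] with ω hω hfω
    by_contra hω'
    have hωA : ω ∈ A := not_lt.mp hω'
    exact hfω.not_ge (by simpa [hωA] using hω)
  · exact hf.aestronglyMeasurable.aemeasurable.ennreal_ofReal.mul
      ((measurable_const.indicator (hm A hA)).aemeasurable)

theorem setLIntegral_inv_condExp_indicator (hm : m ≤ m0) [SigmaFinite (μ.trim hm)]
    {S B : Set Ω} (hS : MeasurableSet S) (hμS : μ S ≠ ∞) (hB : MeasurableSet[m] B) :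
    ∫⁻ ω in B ∩ S, ENNReal.ofReal (μ[S.indicator (fun _ => (1 : ℝ))|m] ω)⁻¹ ∂μ
      = μ (B ∩ {ω | 0 < μ[S.indicator (fun _ => (1 : ℝ))|m] ω}) := by
  set Z := μ[S.indicator (fun _ => (1 : ℝ))|m]
  set U := {ω | 0 < Z ω}
  have hU : MeasurableSet[m] U :=
    measurableSet_lt measurable_const stronglyMeasurable_condExp.measurable
  have h := lintegral_ofReal_mul_eq_lintegral_condExp_mul hm
    ((integrableOn_const hμS).integrable_indicator hS)
    (Filter.Eventually.of_forall fun ω => Set.indicator_nonneg (fun _ _ => zero_le_one) ω)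
    (g := (B ∩ U).indicator fun ω => (ENNReal.ofReal (Z ω))⁻¹)
    (stronglyMeasurable_condExp.measurable.ennreal_ofReal.inv.indicator (hB.inter hU))
  have hlhs : ∀ ω, ENNReal.ofReal (S.indicator (fun _ => 1) ω)
      * (B ∩ U).indicator (fun ω => (ENNReal.ofReal (Z ω))⁻¹) ω
      = (B ∩ S).indicator (fun ω => ENNReal.ofReal (Z ω)⁻¹) ω := fun ω => by
    by_cases hωS : ω ∈ S <;> by_cases hωB : ω ∈ B <;> by_cases hωU : ω ∈ U <;>
      simp_all [U, ENNReal.ofReal_inv_of_pos, ENNReal.ofReal_of_nonpos]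
  have hrhs : ∀ ω,
      ENNReal.ofReal (Z ω) * (B ∩ U).indicator (fun ω => (ENNReal.ofReal (Z ω))⁻¹) ω
        = (B ∩ U).indicator 1 ω := fun ω => by
    by_cases hω : ω ∈ B ∩ U
    · simp [hω, ENNReal.mul_inv_cancel (ENNReal.ofReal_pos.2 hω.2).ne']
    · simp [hω]
  rwa [lintegral_congr hlhs, lintegral_congr hrhs, lintegral_indicator ((hm _ hB).inter hS),
    lintegral_indicator_one (hm _ (hB.inter hU))] at h

theorem ae_nonneg_inv_condExp_indicator (S : Set Ω) :
    ∀ᵐ ω ∂μ, 0 ≤ (μ[S.indicator (fun _ => (1 : ℝ))|m] ω)⁻¹ :=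
  (condExp_nonneg (Filter.Eventually.of_forall fun ω =>
    Set.indicator_nonneg (fun _ _ => zero_le_one) ω)).mono fun _ h => inv_nonneg.2 h

variable [IsFiniteMeasure μ]

theorem integrableOn_inv_condExp_indicator (hm : m ≤ m0) {S : Set Ω} (hS : MeasurableSet S) :
    IntegrableOn (fun ω => (μ[S.indicator (fun _ => (1 : ℝ))|m] ω)⁻¹) S μ := by
  refine ⟨(stronglyMeasurable_condExp.mono hm).measurable.inv.aestronglyMeasurable, ?_⟩
  rw [hasFiniteIntegral_iff_ofReal (ae_restrict_of_ae (ae_nonneg_inv_condExp_indicator S))]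
  have h := setLIntegral_inv_condExp_indicator hm hS (measure_ne_top μ S) .univ
  rw [univ_inter] at h
  exact h ▸ measure_lt_top μ _

theorem setIntegral_inv_condExp_indicator (hm : m ≤ m0) {S B : Set Ω} (hS : MeasurableSet S)
    (hB : MeasurableSet[m] B) :
    ∫ ω in B ∩ S, (μ[S.indicator (fun _ => (1 : ℝ))|m] ω)⁻¹ ∂μ
      = μ.real (B ∩ {ω | 0 < μ[S.indicator (fun _ => (1 : ℝ))|m] ω}) := by
  rw [integral_eq_lintegral_of_nonneg_ae (ae_restrict_of_ae (ae_nonneg_inv_condExp_indicator S))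
    (stronglyMeasurable_condExp.mono hm).measurable.inv.aestronglyMeasurable,
    setLIntegral_inv_condExp_indicator hm hS (measure_ne_top μ S) hB, measureReal_def]

end CondExp

theorem MeasurableSpace.exists_measurableSet_inter_fiber_eq {Ω E : Type*} {m : MeasurableSpace Ω}
    {L : Ω → E} {A : Set Ω} (hA : MeasurableSet[m ⊔ MeasurableSpace.comap L ⊤] A) (x : E) :
    ∃ B, MeasurableSet[m] B ∧ A ∩ {ω | L ω = x} = B ∩ {ω | L ω = x} := by
  induction hA with
  | basic A hA =>
    rcases hA with hA | ⟨C, -, rfl⟩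
    · exact ⟨A, hA, rfl⟩
    · by_cases hx : x ∈ C
      · exact ⟨univ, .univ, by ext ω; simp; rintro rfl; exact hx⟩
      · exact ⟨∅, .empty, by ext ω; simp; rintro h rfl; exact hx h⟩
  | empty => exact ⟨∅, .empty, rfl⟩
  | compl A _ ih =>
    obtain ⟨B, hB, h⟩ := ih
    refine ⟨Bᶜ, hB.compl, ?_⟩
    ext ω
    have := congrArg (ω ∈ ·) h
    simp only [mem_inter_iff, mem_compl_iff, eq_iff_iff] at this ⊢
    tauto
  | iUnion f _ ih =>
    choose B hB h using ih
    exact ⟨⋃ n, B n, .iUnion hB, by simp_rw [iUnion_inter, h]⟩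

theorem Measurable.comap_top_le {Ω E : Type*} {m0 : MeasurableSpace Ω} [MeasurableSpace E]
    [DiscreteMeasurableSpace E] {L : Ω → E} (hL : Measurable L) :
    MeasurableSpace.comap L ⊤ ≤ m0 := by
  rintro _ ⟨C, -, rfl⟩
  exact hL .of_discrete

section LikelihoodRatio

variable {Ω E : Type*} {m m' m0 : MeasurableSpace Ω} {μ : Measure Ω} {L : Ω → E}

/-- The paper's `q^x_t = P(L = x | 𝓕_t) / P(L = x)`, for the information `m = 𝓕_t`. -/
noncomputable def likelihoodRatio (μ : Measure Ω) (m : MeasurableSpace Ω) (L : Ω → E) (x : E)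
    (ω : Ω) : ℝ :=
  μ[{ω' | L ω' = x}.indicator (fun _ => (1 : ℝ)) | m] ω / (μ {ω' | L ω' = x}).toReal

theorem measurable_likelihoodRatio (x : E) : Measurable[m] (likelihoodRatio μ m L x) :=
  stronglyMeasurable_condExp.measurable.div_const _

theorem inv_likelihoodRatio (x : E) (ω : Ω) :
    (likelihoodRatio μ m L x ω)⁻¹
      = μ.real {ω | L ω = x} * (μ[{ω' | L ω' = x}.indicator (fun _ => (1 : ℝ)) | m] ω)⁻¹ := by
  rw [likelihoodRatio, inv_div, div_eq_mul_inv, measureReal_def]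

theorem inv_likelihoodRatio_comp_eq_sum [Fintype E] :
    (fun ω => (likelihoodRatio μ m L (L ω) ω)⁻¹)
      = fun ω => ∑ x, {ω | L ω = x}.indicator (fun ω => (likelihoodRatio μ m L x ω)⁻¹) ω := by
  funext ω
  rw [Fintype.sum_eq_single (L ω), indicator_of_mem (show ω ∈ {ω' | L ω' = L ω} from rfl)]
  exact fun x hx => indicator_of_notMem (show ω ∉ {ω' | L ω' = x} from fun h => hx h.symm) _

theorem measure_pos_likelihoodRatio_eq_one_of_le [IsProbabilityMeasure μ] (hmm' : m ≤ m')
    (hm' : m' ≤ m0) {x : E} (h : μ {ω | 0 < likelihoodRatio μ m' L x ω} = 1) :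
    μ {ω | 0 < likelihoodRatio μ m L x ω} = 1 := by
  set f := {ω' | L ω' = x}.indicator (fun _ => (1 : ℝ))
  -- if `P(L = x) = 0`, then `likelihoodRatio` vanishes identically (as `a / 0 = 0`)
  have hc : 0 < (μ {ω | L ω = x}).toReal := by
    by_contra hc
    simp [likelihoodRatio, le_antisymm (not_lt.1 hc) ENNReal.toReal_nonneg] at h
  simp_rw [likelihoodRatio, div_pos_iff_of_pos_right hc] at h ⊢
  rw [← mem_ae_iff_prob_eq_one (measurableSet_lt measurable_const
    (stronglyMeasurable_condExp.mono (hmm'.trans hm')).measurable)]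
  rw [← mem_ae_iff_prob_eq_one (measurableSet_lt measurable_const
    (stronglyMeasurable_condExp.mono hm').measurable)] at h
  filter_upwards [ae_pos_condExp (hmm'.trans hm') (integrable_condExp (m := m') (f := f)) h,
    condExp_condExp_of_le (f := f) hmm' hm'] with ω hpos htower
  rwa [← htower]

variable [MeasurableSpace E] [MeasurableSingletonClass E]

theorem Measurable.measurableSet_fiber (hL : Measurable L) (x : E) :
    MeasurableSet {ω | L ω = x} :=
  hL (measurableSet_singleton x)

theorem integrable_indicator_inv_likelihoodRatio [IsFiniteMeasure μ] (hm : m ≤ m0)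
    (hL : Measurable L) (x : E) :
    Integrable ({ω | L ω = x}.indicator fun ω => (likelihoodRatio μ m L x ω)⁻¹) μ := by
  simp_rw [inv_likelihoodRatio]
  exact IntegrableOn.integrable_indicator
    ((integrableOn_inv_condExp_indicator hm (hL.measurableSet_fiber x)).const_mul _)
    (hL.measurableSet_fiber x)

theorem setIntegral_inv_likelihoodRatio [IsFiniteMeasure μ] (hm : m ≤ m0) (hL : Measurable L)
    (x : E) {B : Set Ω} (hB : MeasurableSet[m] B) :
    ∫ ω in B ∩ {ω | L ω = x}, (likelihoodRatio μ m L x ω)⁻¹ ∂μ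
      = μ.real {ω | L ω = x} * μ.real (B ∩ {ω | 0 < likelihoodRatio μ m L x ω}) := by
  simp_rw [inv_likelihoodRatio]
  rw [integral_const_mul, setIntegral_inv_condExp_indicator hm (hL.measurableSet_fiber x) hB]
  rcases (measureReal_nonneg (μ := μ) (s := {ω | L ω = x})).eq_or_lt with hc | hc
  · simp [← hc] -- both sides vanish, the left one by the convention `a / 0 = 0`
  · congr 3
    ext ω
    exact (div_pos_iff_of_pos_right hc).symm

theorem measure_pos_likelihoodRatio_eq_one_of_trivial [IsFiniteMeasure μ] (hm : m ≤ m0)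
    (hL : Measurable L) (htriv : ∀ A, MeasurableSet[m] A → μ A = 0 ∨ μ A = 1) {x : E}
    (hx : 0 < μ {ω | L ω = x}) :
    μ {ω | 0 < likelihoodRatio μ m L x ω} = 1 := by
  have hc : 0 < (μ {ω | L ω = x}).toReal := ENNReal.toReal_pos hx.ne' (measure_ne_top μ _)
  simp_rw [likelihoodRatio, div_pos_iff_of_pos_right hc]
  refine (htriv _ (measurableSet_lt measurable_const stronglyMeasurable_condExp.measurable)
    ).resolve_left fun h0 => hc.not_ge ?_
  calc (μ {ω | L ω = x}).toReal
      = ∫ ω, μ[{ω' | L ω' = x}.indicator (fun _ => (1 : ℝ)) | m] ω ∂μ := by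
        rw [integral_condExp hm, integral_indicator (hL.measurableSet_fiber x), setIntegral_const,
          smul_eq_mul, mul_one, measureReal_def]
    _ ≤ 0 := integral_nonpos_of_ae
        ((measure_eq_zero_iff_ae_notMem.1 h0).mono fun _ h => not_lt.1 h)

variable [Fintype E]

theorem integrable_inv_likelihoodRatio_comp [IsFiniteMeasure μ] (hm : m ≤ m0)
    (hL : Measurable L) :
    Integrable (fun ω => (likelihoodRatio μ m L (L ω) ω)⁻¹) μ := by
  rw [inv_likelihoodRatio_comp_eq_sum]
  exact integrable_finsetSum _ fun x _ => integrable_indicator_inv_likelihoodRatio hm hL x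

theorem setIntegral_inv_likelihoodRatio_comp [IsFiniteMeasure μ] (hm : m ≤ m0)
    (hL : Measurable L) {A : Set Ω} {B : E → Set Ω} (hB : ∀ x, MeasurableSet[m] (B x))
    (hAB : ∀ x, A ∩ {ω | L ω = x} = B x ∩ {ω | L ω = x}) :
    ∫ ω in A, (likelihoodRatio μ m L (L ω) ω)⁻¹ ∂μ
      = ∑ x, μ.real {ω | L ω = x} * μ.real (B x ∩ {ω | 0 < likelihoodRatio μ m L x ω}) := by
  rw [inv_likelihoodRatio_comp_eq_sum,
    integral_finsetSum _ fun x _ => (integrable_indicator_inv_likelihoodRatio hm hL x).integrableOn]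
  refine Finset.sum_congr rfl fun x _ => ?_
  rw [setIntegral_indicator (hL.measurableSet_fiber x), hAB x,
    setIntegral_inv_likelihoodRatio hm hL x (hB x)]

variable [IsProbabilityMeasure μ]

theorem integral_inv_likelihoodRatio_comp_eq_one_iff (hm : m ≤ m0) (hL : Measurable L)
    (hpos : ∀ x, 0 < μ {ω | L ω = x}) :
    ∫ ω, (likelihoodRatio μ m L (L ω) ω)⁻¹ ∂μ = 1
      ↔ ∀ x, μ {ω | 0 < likelihoodRatio μ m L x ω} = 1 := by
  set c : E → ℝ := fun x => μ.real {ω | L ω = x}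
  set p : E → ℝ := fun x => μ.real {ω | 0 < likelihoodRatio μ m L x ω}
  have hc : ∀ x, 0 < c x := fun x => ENNReal.toReal_pos (hpos x).ne' (measure_ne_top μ _)
  have hsum : ∑ x, c x = 1 :=
    (sum_measureReal_preimage_singleton (μ := μ) Finset.univ
      fun x _ => hL (measurableSet_singleton x)).trans (by simp)
  have hint : ∫ ω, (likelihoodRatio μ m L (L ω) ω)⁻¹ ∂μ = ∑ x, c x * p x := by
    rw [← setIntegral_univ, setIntegral_inv_likelihoodRatio_comp hm hL (B := fun _ => univ)
      (fun _ => .univ) fun _ => rfl]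
    simp only [univ_inter, c, p]
  calc ∫ ω, (likelihoodRatio μ m L (L ω) ω)⁻¹ ∂μ = 1
      ↔ ∑ x, c x * (1 - p x) = 0 := by
        simp only [hint, mul_sub, mul_one, Finset.sum_sub_distrib, hsum, sub_eq_zero]
        exact eq_comm
    _ ↔ ∀ x, c x * (1 - p x) = 0 := by
        rw [Fintype.sum_eq_zero_iff_of_nonneg fun x => mul_nonneg (hc x).le
          (sub_nonneg.2 measureReal_le_one), funext_iff]
        rfl
    _ ↔ ∀ x, μ {ω | 0 < likelihoodRatio μ m L x ω} = 1 := by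
        simp only [mul_eq_zero, (hc _).ne', false_or, sub_eq_zero, eq_comm (a := (1 : ℝ)), p,
          measureReal_def, ENNReal.toReal_eq_one_iff]

theorem condExp_inv_likelihoodRatio_comp_ae_eq (hmm' : m ≤ m') (hm' : m' ≤ m0)
    (hL : Measurable L) (h : ∀ x, μ {ω | 0 < likelihoodRatio μ m' L x ω} = 1) :
    μ[(fun ω => (likelihoodRatio μ m' L (L ω) ω)⁻¹) | m ⊔ MeasurableSpace.comap L ⊤]
      =ᵐ[μ] fun ω => (likelihoodRatio μ m L (L ω) ω)⁻¹ := by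
  have hm : m ≤ m0 := hmm'.trans hm'
  have hG : m ⊔ MeasurableSpace.comap L ⊤ ≤ m0 := sup_le hm hL.comap_top_le
  have hconull : ∀ {n : MeasurableSpace Ω} (hn : n ≤ m0) (B : Set Ω) (x : E),
      μ {ω | 0 < likelihoodRatio μ n L x ω} = 1 →
      μ.real (B ∩ {ω | 0 < likelihoodRatio μ n L x ω}) = μ.real B := fun hn B x h1 => by
    rw [measureReal_def, measureReal_def, measure_inter_conull]
    rwa [prob_compl_eq_zero_iff (measurableSet_lt measurable_const
      ((measurable_likelihoodRatio x).mono hn le_rfl))]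
  refine (ae_eq_condExp_of_forall_setIntegral_eq hG (integrable_inv_likelihoodRatio_comp hm' hL)
    (fun _ _ _ => (integrable_inv_likelihoodRatio_comp hm hL).integrableOn) ?_ ?_).symm
  · intro A hA _
    choose B hB hAB using MeasurableSpace.exists_measurableSet_inter_fiber_eq hA
    rw [setIntegral_inv_likelihoodRatio_comp hm hL hB hAB,
      setIntegral_inv_likelihoodRatio_comp hm' hL (fun x => hmm' _ (hB x)) hAB]
    refine Finset.sum_congr rfl fun x _ => ?_
    rw [hconull hm _ x (measure_pos_likelihoodRatio_eq_one_of_le hmm' hm' (h x)),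
      hconull hm' _ x (h x)]
  · rw [inv_likelihoodRatio_comp_eq_sum]
    refine (Finset.measurable_sum _ fun x _ => ?_).aestronglyMeasurable
    exact (((measurable_likelihoodRatio x).mono le_sup_left le_rfl).inv).indicator
      (le_sup_right (a := m) _ ⟨{x}, trivial, rfl⟩)

end LikelihoodRatio

/-- Let `L` be a discrete random variable with finite range, all atoms of
positive probability, `q^x_t := P(L = x | 𝓕_t)/P(L = x)` and `𝓖_t = 𝓕_t ⊔ σ(L)`, with
`𝓕_0` trivial. Then `E[1/q^L_T] = 1` implies that `(1/q^L_t)_{t ∈ [0,T]}` is a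
`𝓖`-martingale; conversely, if `(1/q^L_t)` is a `𝓖`-martingale then `E[1/q^L_T] = 1`
(using `q^L_0 = 1`). -/
theorem value_info_stmt17
    {Ω : Type*} {m0 : MeasurableSpace Ω} (μ : Measure Ω) [IsProbabilityMeasure μ]
    (ℱ : Filtration ℝ m0)
    (hF0 : ∀ A : Set Ω, MeasurableSet[ℱ 0] A → μ A = 0 ∨ μ A = 1)
    {E : Type*} [Fintype E] [MeasurableSpace E] [MeasurableSingletonClass E]
    (L : Ω → E) (hL : Measurable L)
    (hpos : ∀ x : E, 0 < μ {ω | L ω = x})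
    (T : ℝ) (hT : 0 ≤ T)
    (q : ℝ → E → Ω → ℝ)
    (hq : ∀ t x, q t x =
      fun ω => (μ[Set.indicator {ω' | L ω' = x} (fun _ => (1 : ℝ)) | ℱ t]) ω
        / (μ {ω' | L ω' = x}).toReal) :
    ((∫ ω, (q T (L ω) ω)⁻¹ ∂μ = 1) ↔ (∀ x : E, μ {ω | 0 < q T x ω} = 1))
    ∧ ((∫ ω, (q T (L ω) ω)⁻¹ ∂μ = 1) →
        (∀ s t : ℝ, 0 ≤ s → s ≤ t → t ≤ T →
          μ[(fun ω => (q t (L ω) ω)⁻¹) | (ℱ s) ⊔ (MeasurableSpace.comap L ⊤)]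
            =ᵐ[μ] fun ω => (q s (L ω) ω)⁻¹))
    ∧ ((∀ s t : ℝ, 0 ≤ s → s ≤ t → t ≤ T →
          μ[(fun ω => (q t (L ω) ω)⁻¹) | (ℱ s) ⊔ (MeasurableSpace.comap L ⊤)]
            =ᵐ[μ] fun ω => (q s (L ω) ω)⁻¹) →
        ∫ ω, (q T (L ω) ω)⁻¹ ∂μ = 1) := by
  obtain rfl : q = fun t => likelihoodRatio μ (ℱ t) L := funext fun t => funext (hq t)
  have hY : ∀ t, ∫ ω, (likelihoodRatio μ (ℱ t) L (L ω) ω)⁻¹ ∂μ = 1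
      ↔ ∀ x, μ {ω | 0 < likelihoodRatio μ (ℱ t) L x ω} = 1 :=
    fun t => integral_inv_likelihoodRatio_comp_eq_one_iff (ℱ.le t) hL hpos
  refine ⟨hY T, fun hT1 s t _ hst htT => ?_, fun hmart => ?_⟩
  · exact condExp_inv_likelihoodRatio_comp_ae_eq (ℱ.mono hst) (ℱ.le t) hL fun x =>
      measure_pos_likelihoodRatio_eq_one_of_le (ℱ.mono htT) (ℱ.le T) ((hY T).1 hT1 x)
  · calc ∫ ω, (likelihoodRatio μ (ℱ T) L (L ω) ω)⁻¹ ∂μ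
        = ∫ ω, (μ[fun ω => (likelihoodRatio μ (ℱ T) L (L ω) ω)⁻¹
            | ℱ 0 ⊔ MeasurableSpace.comap L ⊤]) ω ∂μ :=
          (integral_condExp (sup_le (ℱ.le 0) hL.comap_top_le)).symm
      _ = ∫ ω, (likelihoodRatio μ (ℱ 0) L (L ω) ω)⁻¹ ∂μ :=
          integral_congr_ae (hmart 0 T le_rfl hT le_rfl)
      _ = 1 := (hY 0).2 fun x =>
          measure_pos_likelihoodRatio_eq_one_of_trivial (ℱ.le 0) hL hF0 (hpos x)
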